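/- arXiv:1409.3819 — 3 statements merged into one kernel-verified Lean document; each statement's English description precedes it below -/
import Mathlib

section
/- Soundness of coalescing modal subexpressions to FOL (Theorem 1): for any set Γ of FOML formulas and any FOML formula φ, if ⟦Γ⟧ ⊨_FOL ⟦φ⟧ (first-order consequence of the coalesced formulas), then Γ ⊨ φ (FOML consequence). -/
open scoped Classical

/-- FOML expressions. -/
inductive Expr (X V O : Type) (ar : O → ℕ) : Type where
  | rig   : X → Expr X V O ar
  | flex  : V → Expr X V O ar
  | app   : (op : O) → (Fin (ar op) → Expr X V O ar) → Expr X V O ar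
  | eq    : Expr X V O ar → Expr X V O ar → Expr X V O ar
  | fls   : Expr X V O ar
  | imp   : Expr X V O ar → Expr X V O ar → Expr X V O ar
  | all   : X → Expr X V O ar → Expr X V O ar
  | nabla : Expr X V O ar → Expr X V O ar

/-- Kripke model for FOML (with the rigid valuation ξ given separately). -/
structure Model (X V O : Type) (ar : O → ℕ) where
  U : Type
  tt : U
  ff : U
  tt_ne_ff : tt ≠ ff
  I : (op : O) → (Fin (ar op) → U) → U
  W : Type
  W_nonempty : Nonempty W
  R : W → W → Prop
  ζ : V → W → U
  box : Set U → U
  box_eq_tt : ∀ S : Set U, box S = tt ↔ S ⊆ {tt}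

variable {X V O : Type} {ar : O → ℕ}

noncomputable def eval (M : Model X V O ar) : Expr X V O ar → (X → M.U) → M.W → M.U
  | .rig x, ξ, _ => ξ x
  | .flex v, _, w => M.ζ v w
  | .app op es, ξ, w => M.I op (fun i => eval M (es i) ξ w)
  | .eq a b, ξ, w => if eval M a ξ w = eval M b ξ w then M.tt else M.ff
  | .fls, _, _ => M.ff
  | .imp a b, ξ, w => if (eval M a ξ w = M.tt → eval M b ξ w = M.tt) then M.tt else M.ff
  | .all x e, ξ, w => if (∀ d : M.U, eval M e (Function.update ξ x d) w = M.tt) then M.tt else M.ff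
  | .nabla e, ξ, w => M.box {u : M.U | ∃ w', M.R w w' ∧ eval M e ξ w' = u}

def sat (M : Model X V O ar) (ξ : X → M.U) (e : Expr X V O ar) (w : M.W) : Prop :=
  eval M e ξ w = M.tt

def Valid (e : Expr X V O ar) : Prop :=
  ∀ (M : Model X V O ar) (ξ : X → M.U) (w : M.W), sat M ξ e w

def Consequence (Γ : Set (Expr X V O ar)) (φ : Expr X V O ar) : Prop :=
  ∀ (M : Model X V O ar) (ξ : X → M.U),
    (∀ ψ ∈ Γ, ∀ w : M.W, sat M ξ ψ w) → ∀ w : M.W, sat M ξ φ w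

def Rigid : Expr X V O ar → Prop
  | .rig _ => True
  | .flex _ => False
  | .app _ es => ∀ i, Rigid (es i)
  | .eq a b => Rigid a ∧ Rigid b
  | .fls => True
  | .imp a b => Rigid a ∧ Rigid b
  | .all _ e => Rigid e
  | .nabla _ => False

def freeRigid (y : X) : Expr X V O ar → Prop
  | .rig x => y = x
  | .flex _ => False
  | .app _ es => ∃ i, freeRigid y (es i)
  | .eq a b => freeRigid y a ∨ freeRigid y b
  | .fls => False
  | .imp a b => freeRigid y a ∨ freeRigid y b
  | .all x e => y ≠ x ∧ freeRigid y e
  | .nabla e => freeRigid y e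

/-! ### de Bruijn representation, used to identify λ-abstractions up to α-equivalence -/

/-- Locally-nameless / de Bruijn version of FOML expressions: bound rigid variables
    are represented by indices, free rigid variables by names.  Two named expressions
    (or λ-abstractions over lists of rigid variables) are α-equivalent iff they have
    the same de Bruijn image. -/
inductive DB (X V O : Type) (ar : O → ℕ) : Type where
  | bvar  : ℕ → DB X V O ar
  | fvar  : X → DB X V O ar
  | flex  : V → DB X V O ar
  | app   : (op : O) → (Fin (ar op) → DB X V O ar) → DB X V O ar
  | eq    : DB X V O ar → DB X V O ar → DB X V O ar
  | fls   : DB X V O ar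
  | imp   : DB X V O ar → DB X V O ar → DB X V O ar
  | all   : DB X V O ar → DB X V O ar
  | nabla : DB X V O ar → DB X V O ar

/-- Conversion to de Bruijn form, relative to a context `ctx` of bound rigid
    variables (innermost binder first). -/
noncomputable def toDB (ctx : List X) : Expr X V O ar → DB X V O ar
  | .rig x =>
      match ctx.findIdx? (fun y => decide (y = x)) with
      | some i => .bvar i
      | none => .fvar x
  | .flex v => .flex v
  | .app op es => .app op (fun i => toDB ctx (es i))
  | .eq a b => .eq (toDB ctx a) (toDB ctx b)
  | .fls => .fls
  | .imp a b => .imp (toDB ctx a) (toDB ctx b)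
  | .all x e => .all (toDB (x :: ctx) e)
  | .nabla e => .nabla (toDB ctx e)

/-! ### First-order logic (FOL fragment) -/

/-- FOL expressions over a set `U'` of variables and operator symbols `O'`. -/
inductive FExpr (U' O' : Type) (ar' : O' → ℕ) : Type where
  | var : U' → FExpr U' O' ar'
  | app : (op : O') → (Fin (ar' op) → FExpr U' O' ar') → FExpr U' O' ar'
  | eq  : FExpr U' O' ar' → FExpr U' O' ar' → FExpr U' O' ar'
  | fls : FExpr U' O' ar'
  | imp : FExpr U' O' ar' → FExpr U' O' ar' → FExpr U' O' ar'
  | all : U' → FExpr U' O' ar' → FExpr U' O' ar'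

/-- A first-order structure (interpretation part; the variable valuation is given
    separately so that it can be varied in the clause for ∀). -/
structure FOLStruct (O' : Type) (ar' : O' → ℕ) where
  U : Type
  tt : U
  ff : U
  tt_ne_ff : tt ≠ ff
  I : (op : O') → (Fin (ar' op) → U) → U

noncomputable def feval {U' O' : Type} {ar' : O' → ℕ} (S : FOLStruct O' ar') :
    FExpr U' O' ar' → (U' → S.U) → S.U
  | .var u, ξ => ξ u
  | .app op es, ξ => S.I op (fun i => feval S (es i) ξ)
  | .eq a b, ξ => if feval S a ξ = feval S b ξ then S.tt else S.ff
  | .fls, _ => S.ff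
  | .imp a b, ξ => if (feval S a ξ = S.tt → feval S b ξ = S.tt) then S.tt else S.ff
  | .all u e, ξ => if (∀ d : S.U, feval S e (Function.update ξ u d) = S.tt) then S.tt else S.ff

/-- First-order consequence: every structure (with its valuation) making all
    premises true makes the conclusion true. -/
def FOLConsequence {U' O' : Type} {ar' : O' → ℕ}
    (Δ : Set (FExpr U' O' ar')) (χ : FExpr U' O' ar') : Prop :=
  ∀ (S : FOLStruct O' ar') (ξ : U' → S.U),
    (∀ ψ ∈ Δ, feval S ψ ξ = S.tt) → feval S χ ξ = S.tt

/-! ### Coalescing modal subexpressions to FOL -/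

/-- Operator symbols of the coalesced FOL language: the original symbols of 𝒪
    together with a fresh symbol ⟨λ z⃗ : ∇e⟩ for each λ-abstraction of a modal
    expression over a list z⃗ of rigid variables; such λ-abstractions are
    represented by (|z⃗|, de Bruijn image), so that two of them are identified
    iff they are α-equivalent. -/
def FOp (X V O : Type) (ar : O → ℕ) : Type := O ⊕ (ℕ × DB X V O ar)

def FOpAr : FOp X V O ar → ℕ
  | .inl op => ar op
  | .inr p => p.1

/-- Coalescing ⟦e^{y⃗}⟧ of an FOML expression, relative to the list y⃗ of
    rigid variables bound above (innermost first): modal subexpressions ∇e are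
    replaced by the fresh operator ⟨λ z⃗ : ∇e⟩ applied to z⃗, where z⃗ is the
    subsequence of variables of y⃗ that occur free in e.  Flexible variables
    are treated as FOL variables in the extended set 𝒳 ⊕ 𝒱. -/
noncomputable def coal (ys : List X) :
    Expr X V O ar → FExpr (X ⊕ V) (FOp X V O ar) FOpAr
  | .rig x => .var (.inl x)
  | .flex v => .var (.inr v)
  | .app op es => .app (.inl op) (fun i => coal ys (es i))
  | .eq a b => .eq (coal ys a) (coal ys b)
  | .fls => .fls
  | .imp a b => .imp (coal ys a) (coal ys b)
  | .all x e => .all (.inl x) (coal (x :: ys) e)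
  | .nabla e =>
      let z : List X := ys.filter (fun y => decide (freeRigid y e))
      .app (.inr (z.length, toDB z (.nabla e))) (fun i => .var (.inl (z.get i)))

/-!
A Kripke model `M` with rigid valuation `ξ` and a state `w₀` yields a first-order structure
on the same universe, in which each fresh symbol `⟨λ z⃗ : ∇e⟩` denotes the function
`z⃗ ↦ ⟦∇e⟧_{w₀}`. This respects the identification of α-equivalent abstractions, since it
is computed from the de Bruijn image alone. Valuing the flexible variables by their values
at `w₀`, each coalesced formula `⟦ψ⟧` takes the value of `ψ` at `w₀`; so if the premises hold
throughout `M`, their coalesced forms hold in this structure, hence so does `⟦φ⟧`, i.e. `φ`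
holds at `w₀`.
-/

noncomputable def evalDB (M : Model X V O ar) (ξ : X → M.U) :
    DB X V O ar → Stream' M.U → M.W → M.U
  | .bvar i, env, _ => env i
  | .fvar x, _, _ => ξ x
  | .flex v, _, w => M.ζ v w
  | .app op es, env, w => M.I op (fun i => evalDB M ξ (es i) env w)
  | .eq a b, env, w => if evalDB M ξ a env w = evalDB M ξ b env w then M.tt else M.ff
  | .fls, _, _ => M.ff
  | .imp a b, env, w =>
      if (evalDB M ξ a env w = M.tt → evalDB M ξ b env w = M.tt) then M.tt else M.ff
  | .all e, env, w =>
      if (∀ d : M.U, evalDB M ξ e (Stream'.cons d env) w = M.tt) then M.tt else M.ff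
  | .nabla e, env, w => M.box {u : M.U | ∃ w', M.R w w' ∧ evalDB M ξ e env w' = u}

/-- The value that `evalDB _ ξ (toDB ctx (.rig x)) env` gives the variable `x`. -/
noncomputable def ctxValue {U : Type} (ξ : X → U) (ctx : List X) (env : Stream' U) (x : X) : U :=
  (ctx.findIdx? (fun y => decide (y = x))).elim (ξ x) env

theorem ctxValue_cons_self {U : Type} (ξ : X → U) (ctx : List X) (env : Stream' U)
    (x : X) (d : U) : ctxValue ξ (x :: ctx) (Stream'.cons d env) x = d := by
  simp only [ctxValue, List.findIdx?_cons, decide_true, if_true]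
  rfl

theorem ctxValue_cons_of_ne {U : Type} (ξ : X → U) (ctx : List X) (env : Stream' U)
    {x y : X} (d : U) (hyx : y ≠ x) :
    ctxValue ξ (x :: ctx) (Stream'.cons d env) y = ctxValue ξ ctx env y := by
  simp only [ctxValue, List.findIdx?_cons, Ne.symm hyx, decide_false, Bool.false_eq_true,
    if_false]
  cases ctx.findIdx? (fun z => decide (z = y)) <;> rfl

theorem ctxValue_eq {U : Type} {ξ σ : X → U} {ctx : List X} {env : Stream' U} {x : X}
    (hbound : ∀ (i : ℕ) (h : i < ctx.length), env i = σ ctx[i]) (hfree : x ∉ ctx → ξ x = σ x) :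
    ctxValue ξ ctx env x = σ x := by
  unfold ctxValue
  cases hfind : ctx.findIdx? (fun y => decide (y = x)) with
  | none =>
    exact hfree fun hx => by simpa using List.findIdx?_eq_none_iff.mp hfind x hx
  | some i =>
    obtain ⟨hi, hix, -⟩ := List.findIdx?_eq_some_iff_getElem.mp hfind
    exact (hbound i hi).trans (congrArg σ (of_decide_eq_true hix))

theorem evalDB_toDB (M : Model X V O ar) (ξ : X → M.U) (e : Expr X V O ar) (ctx : List X)
    (env : Stream' M.U) (σ : X → M.U) (w : M.W)
    (hσ : ∀ x, freeRigid x e → σ x = ctxValue ξ ctx env x) :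
    evalDB M ξ (toDB ctx e) env w = eval M e σ w := by
  induction e generalizing ctx env σ w with
  | rig x =>
    simp only [toDB, eval]
    rw [hσ x rfl, ctxValue]
    cases ctx.findIdx? (fun y => decide (y = x)) <;> rfl
  | flex v => rfl
  | app op es ih =>
    exact congrArg (M.I op) (funext fun i => ih i ctx env σ w fun x hx => hσ x ⟨i, hx⟩)
  | eq a b iha ihb =>
    simp only [toDB, evalDB, eval, iha ctx env σ w fun x hx => hσ x (Or.inl hx),
      ihb ctx env σ w fun x hx => hσ x (Or.inr hx)]
  | fls => rfl
  | imp a b iha ihb =>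
    simp only [toDB, evalDB, eval, iha ctx env σ w fun x hx => hσ x (Or.inl hx),
      ihb ctx env σ w fun x hx => hσ x (Or.inr hx)]
  | all x e ih =>
    have hbody (d : M.U) : evalDB M ξ (toDB (x :: ctx) e) (Stream'.cons d env) w
        = eval M e (Function.update σ x d) w := by
      refine ih _ _ _ w fun y hy => ?_
      by_cases hyx : y = x
      · subst hyx
        rw [Function.update_self, ctxValue_cons_self]
      · rw [Function.update_of_ne hyx, ctxValue_cons_of_ne ξ ctx env d hyx]
        exact hσ y ⟨hyx, hy⟩
    simp only [toDB, evalDB, eval, hbody]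
  | nabla e ih =>
    simp only [toDB, evalDB, eval, ih ctx env σ _ hσ]

/-- The fresh symbol `⟨λ z⃗ : ∇e⟩` of arity `n` denotes `∇e` evaluated at `w₀` with its `n`
outermost de Bruijn indices bound to the arguments; `M.tt` fills the indices `≥ n`, which
never occur. -/
noncomputable abbrev coalescedStruct (M : Model X V O ar) (ξ : X → M.U) (w₀ : M.W) :
    FOLStruct (FOp X V O ar) FOpAr where
  U := M.U
  tt := M.tt
  ff := M.ff
  tt_ne_ff := M.tt_ne_ff
  I
    | .inl op => M.I op
    | .inr (n, t) => fun args =>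
        evalDB M ξ t (fun i => if h : i < n then args ⟨i, h⟩ else M.tt) w₀

theorem feval_coal (M : Model X V O ar) (ξ : X → M.U) (w₀ : M.W) (e : Expr X V O ar)
    (ys : List X) (σ : X → M.U) (hσ : ∀ x ∉ ys, σ x = ξ x) :
    feval (coalescedStruct M ξ w₀) (coal ys e) (Sum.elim σ (M.ζ · w₀)) = eval M e σ w₀ := by
  induction e generalizing ys σ with
  | rig x => rfl
  | flex v => rfl
  | app op es ih =>
    exact congrArg (M.I op) (funext fun i => ih i ys σ hσ)
  | eq a b iha ihb =>
    simp only [coal, feval, eval, iha ys σ hσ, ihb ys σ hσ]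
  | fls => rfl
  | imp a b iha ihb =>
    simp only [coal, feval, eval, iha ys σ hσ, ihb ys σ hσ]
  | all x e ih =>
    refine if_congr (forall_congr' fun (d : M.U) => ?_) rfl rfl
    have hbody := ih (x :: ys) (Function.update σ x d) fun y hy => by
      rw [Function.update_of_ne (List.ne_of_not_mem_cons hy)]
      exact hσ y (List.not_mem_of_not_mem_cons hy)
    rw [← hbody]
    -- `convert` absorbs the mismatch between the two `DecidableEq (X ⊕ V)` instances
    convert Iff.rfl using 3
    convert Sum.update_elim_inl.symm
  | nabla e =>
    set z := ys.filter (fun y => decide (freeRigid y e))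
    show evalDB M ξ (toDB z (.nabla e))
      (fun i => if h : i < z.length then σ (z.get ⟨i, h⟩) else M.tt : Stream' M.U) w₀ = _
    refine evalDB_toDB M ξ _ z _ σ w₀ fun x hx => (ctxValue_eq (fun i hi => ?_) fun hxz => ?_).symm
    · exact dif_pos hi
    · exact (hσ x fun hxy => hxz (List.mem_filter.mpr ⟨hxy, decide_eq_true hx⟩)).symm

/-- Theorem 1: soundness of coalescing modal subexpressions to FOL:
    if ⟦Γ⟧ ⊨_FOL ⟦φ⟧ then Γ ⊨ φ. -/
theorem coalescing_to_FOL_sound (X V O : Type) (ar : O → ℕ)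
    (Γ : Set (Expr X V O ar)) (φ : Expr X V O ar)
    (h : FOLConsequence ((fun ψ => coal [] ψ) '' Γ) (coal [] φ)) :
    Consequence Γ φ := by
  intro M ξ hΓ w₀
  have hcoal (ψ : Expr X V O ar) :
      feval (coalescedStruct M ξ w₀) (coal [] ψ) (Sum.elim ξ (M.ζ · w₀)) = eval M ψ ξ w₀ :=
    feval_coal M ξ w₀ ψ [] ξ fun _ _ => rfl
  have hφ := h (coalescedStruct M ξ w₀) (Sum.elim ξ (M.ζ · w₀)) <| by
    rintro _ ⟨ψ, hψ, rfl⟩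
    exact (hcoal ψ).trans (hΓ ψ hψ w₀)
  exact (hcoal φ).symm.trans hφ
end

section
/- Soundness of coalescing first-order subexpressions to propositional modal logic: for any set Γ of FOML formulas and any FOML formula φ, if ⟦Γ⟧, 𝓗(Γ ∪ {φ}) ⊨_ML ⟦φ⟧ (propositional modal consequence of the coalesced formulas together with the rigidity hypotheses), then Γ ⊨ φ (FOML consequence). -/
open scoped Classical

variable {X V O : Type} {ar : O → ℕ}

/-! ### Propositional modal logic (ML) -/

/-- ML formulas over propositional (flexible) variables `P`. -/
inductive MLF (P : Type) : Type where
  | var   : P → MLF P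
  | fls   : MLF P
  | imp   : MLF P → MLF P → MLF P
  | nabla : MLF P → MLF P

/-- A propositional Kripke model (the valuation is Prop-valued: `True` plays the
    role of tt and `False` of ff). -/
structure MLModel (P : Type) where
  W : Type
  W_nonempty : Nonempty W
  R : W → W → Prop
  val : P → W → Prop

def mlsat {P : Type} (K : MLModel P) : MLF P → K.W → Prop
  | .var p, w => K.val p w
  | .fls, _ => False
  | .imp a b, w => mlsat K a w → mlsat K b w
  | .nabla a, w => ∀ w' : K.W, K.R w w' → mlsat K a w'

def MLConsequence {P : Type} (Δ : Set (MLF P)) (χ : MLF P) : Prop :=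
  ∀ K : MLModel P, (∀ ψ ∈ Δ, ∀ w : K.W, mlsat K ψ w) → ∀ w : K.W, mlsat K χ w

/-! ### Coalescing first-order subexpressions to ML -/

/-- Propositional variables of the coalesced ML language: the original flexible
    variables 𝒱 together with a fresh variable ⟨e⟩ for each first-order
    expression e; expressions are represented by their (closed-context) de Bruijn
    image, so that ⟨e⟩ and ⟨e'⟩ are identified iff e and e' are α-equivalent. -/
def MLVar (X V O : Type) (ar : O → ℕ) : Type := V ⊕ DB X V O ar

/-- The fresh propositional variable ⟨e⟩. -/
noncomputable def atomOf (e : Expr X V O ar) : MLVar X V O ar := Sum.inr (toDB [] e)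

/-- Coalescing an FOML expression to an ML formula. -/
noncomputable def mlcoal : Expr X V O ar → MLF (MLVar X V O ar)
  | .rig x => .var (atomOf (.rig x))
  | .flex v => .var (.inl v)
  | .app op es => .var (atomOf (.app op es))
  | .eq a b => .var (atomOf (.eq a b))
  | .fls => .fls
  | .imp a b => .imp (mlcoal a) (mlcoal b)
  | .all x e => .var (atomOf (.all x e))
  | .nabla e => .nabla (mlcoal e)

/-- Occurrence of a propositional variable in an ML formula. -/
def occursVar {P : Type} (p : P) : MLF P → Prop
  | .var q => p = q
  | .fls => False
  | .imp a b => occursVar p a ∨ occursVar p b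
  | .nabla a => occursVar p a

/-- 𝓗(Δ): the rigidity hypotheses ⟨e⟩ ⟹ ∇⟨e⟩, for all fresh variables ⟨e⟩
    introduced in ⟦Δ⟧ that correspond to rigid expressions e. -/
def Hset (Δ : Set (Expr X V O ar)) : Set (MLF (MLVar X V O ar)) :=
  { f | ∃ e : Expr X V O ar, Rigid e ∧
        (∃ ψ ∈ Δ, occursVar (atomOf e) (mlcoal ψ)) ∧
        f = .imp (.var (atomOf e)) (.nabla (.var (atomOf e))) }

/-! A FOML model `M` with rigid valuation `ξ` induces a propositional Kripke model on the same
frame, in which the atom `⟨e⟩` holds at `w` iff `e` evaluates to `tt` at `w`. This is well defined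
on α-classes because the atom only records the de Bruijn image of `e`, and evaluating that image
gives the value of `e`. Coalescing then preserves truth, so the induced model satisfies `⟦Γ⟧`
whenever `M` satisfies `Γ`; it also satisfies every rigidity hypothesis `⟨e⟩ ⟹ ∇⟨e⟩`, since a rigid
expression has the same value in all states. Hence it satisfies `⟦φ⟧`, i.e. `M` satisfies `φ`. -/

/-- The valuation of rigid variables seen under the binders `ctx` (innermost first) when the
bound variables take the values `env` and the free ones the values `ξ`. -/
noncomputable def ctxValuation {U : Type} (ctx : List X) (env : Stream' U) (ξ : X → U) (x : X) :
    U :=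
  match ctx.findIdx? (fun y => decide (y = x)) with
  | some i => env.get i
  | none => ξ x

theorem ctxValuation_nil {U : Type} (env : Stream' U) (ξ : X → U) :
    ctxValuation [] env ξ = ξ :=
  rfl

theorem ctxValuation_cons {U : Type} (x : X) (ctx : List X) (u : U) (env : Stream' U)
    (ξ : X → U) :
    ctxValuation (x :: ctx) (Stream'.cons u env) ξ =
      Function.update (ctxValuation ctx env ξ) x u := by
  funext y
  by_cases hxy : y = x
  · subst hxy
    simp [ctxValuation, List.findIdx?_cons, Stream'.get_zero_cons]
  · simp only [ctxValuation, List.findIdx?_cons, Function.update_of_ne hxy, Ne.symm hxy,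
      decide_false]
    cases ctx.findIdx? (fun z => decide (z = y)) <;> simp [Stream'.get_succ_cons]

namespace Model

variable (M : Model X V O ar)

theorem ite_eq_tt (c : Prop) [Decidable c] : (if c then M.tt else M.ff) = M.tt ↔ c := by
  split_ifs with hc
  · exact iff_of_true rfl hc
  · exact iff_of_false (fun h => M.tt_ne_ff h.symm) hc

theorem box_image_eq_tt (w : M.W) (f : M.W → M.U) :
    M.box {u | ∃ w', M.R w w' ∧ f w' = u} = M.tt ↔ ∀ w', M.R w w' → f w' = M.tt := by
  rw [M.box_eq_tt]
  constructor
  · exact fun H w' hw' => H ⟨w', hw', rfl⟩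
  · rintro H _ ⟨w', hw', rfl⟩
    exact H w' hw'

noncomputable def evalDB : DB X V O ar → Stream' M.U → (X → M.U) → M.W → M.U
  | .bvar n, env, _, _ => env.get n
  | .fvar x, _, ξ, _ => ξ x
  | .flex v, _, _, w => M.ζ v w
  | .app op es, env, ξ, w => M.I op (fun i => evalDB (es i) env ξ w)
  | .eq a b, env, ξ, w => if evalDB a env ξ w = evalDB b env ξ w then M.tt else M.ff
  | .fls, _, _, _ => M.ff
  | .imp a b, env, ξ, w =>
      if (evalDB a env ξ w = M.tt → evalDB b env ξ w = M.tt) then M.tt else M.ff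
  | .all d, env, ξ, w =>
      if (∀ u : M.U, evalDB d (Stream'.cons u env) ξ w = M.tt) then M.tt else M.ff
  | .nabla d, env, ξ, w => M.box {u | ∃ w', M.R w w' ∧ evalDB d env ξ w' = u}

theorem evalDB_toDB (e : Expr X V O ar) (ctx : List X) (env : Stream' M.U) (ξ : X → M.U)
    (w : M.W) : M.evalDB (toDB ctx e) env ξ w = eval M e (ctxValuation ctx env ξ) w := by
  induction e generalizing ctx env w with
  | rig x =>
    simp only [toDB, eval, ctxValuation]
    cases ctx.findIdx? (fun y => decide (y = x)) <;> rfl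
  | flex v => rfl
  | app op es ih => simp only [toDB, evalDB, eval, ih]
  | eq a b iha ihb => simp only [toDB, evalDB, eval, iha, ihb]
  | fls => rfl
  | imp a b iha ihb => simp only [toDB, evalDB, eval, iha, ihb]
  | all x e ih => simp only [toDB, evalDB, eval, ih, ctxValuation_cons]
  | nabla e ih => simp only [toDB, evalDB, eval, ih]

theorem eval_eq_of_rigid {e : Expr X V O ar} (he : Rigid e) (ξ : X → M.U) (w w' : M.W) :
    eval M e ξ w = eval M e ξ w' := by
  induction e generalizing ξ with
  | rig x => rfl
  | flex v => exact he.elim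
  | app op es ih => simp only [eval, fun i => ih i (he i)]
  | eq a b iha ihb => simp only [eval, iha he.1, ihb he.2]
  | fls => rfl
  | imp a b iha ihb => simp only [eval, iha he.1, ihb he.2]
  | all x e ih => simp only [eval, ih he]
  | nabla e _ => exact he.elim

variable (ξ : X → M.U)

/-- The atom `⟨e⟩`, stored as the closed de Bruijn image of `e`, is evaluated with all bound
variables set to the arbitrary value `tt`: for images of expressions there are none free. -/
noncomputable def toMLModel : MLModel (MLVar X V O ar) where
  W := M.W
  W_nonempty := M.W_nonempty
  R := M.R
  val
    | .inl v, w => M.ζ v w = M.tt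
    | .inr d, w => M.evalDB d (Stream'.const M.tt) ξ w = M.tt

theorem mlsat_toMLModel_atomOf (e : Expr X V O ar) (w : M.W) :
    mlsat (M.toMLModel ξ) (.var (atomOf e)) w ↔ sat M ξ e w := by
  change M.evalDB (toDB [] e) _ ξ w = M.tt ↔ _
  rw [evalDB_toDB, ctxValuation_nil]
  rfl

theorem mlsat_toMLModel_mlcoal (e : Expr X V O ar) (w : M.W) :
    mlsat (M.toMLModel ξ) (mlcoal e) w ↔ sat M ξ e w := by
  induction e generalizing w with
  | rig x => exact M.mlsat_toMLModel_atomOf ξ _ w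
  | flex v => rfl
  | app op es => exact M.mlsat_toMLModel_atomOf ξ _ w
  | eq a b => exact M.mlsat_toMLModel_atomOf ξ _ w
  | fls => exact iff_of_false id fun h => M.tt_ne_ff h.symm
  | imp a b iha ihb =>
    simp only [mlcoal, mlsat, sat, eval, ite_eq_tt]
    exact imp_congr (iha w) (ihb w)
  | all x e => exact M.mlsat_toMLModel_atomOf ξ _ w
  | nabla e ih =>
    simp only [mlcoal, mlsat, sat, eval, box_image_eq_tt]
    exact forall₂_congr fun w' _ => ih w'

theorem mlsat_toMLModel_rigidity {e : Expr X V O ar} (he : Rigid e) (w : M.W) :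
    mlsat (M.toMLModel ξ) (.imp (.var (atomOf e)) (.nabla (.var (atomOf e)))) w := by
  intro hw w' _
  have hw : sat M ξ e w := (M.mlsat_toMLModel_atomOf ξ e w).mp hw
  exact (M.mlsat_toMLModel_atomOf ξ e w').mpr ((M.eval_eq_of_rigid he ξ w' w).trans hw)

end Model

/-- Theorem 2: soundness of coalescing first-order subexpressions
    to propositional modal logic: if ⟦Γ⟧, 𝓗(Γ ∪ {φ}) ⊨_ML ⟦φ⟧ then Γ ⊨ φ. -/
theorem coalescing_to_ML_sound (X V O : Type) (ar : O → ℕ)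
    (Γ : Set (Expr X V O ar)) (φ : Expr X V O ar)
    (h : MLConsequence ((fun ψ => mlcoal ψ) '' Γ ∪ Hset (Γ ∪ {φ})) (mlcoal φ)) :
    Consequence Γ φ := by
  intro M ξ hΓ w
  refine (M.mlsat_toMLModel_mlcoal ξ φ w).mp (h (M.toMLModel ξ) ?_ w)
  rintro _ (⟨ψ, hψ, rfl⟩ | ⟨e, he, -, rfl⟩) w'
  · exact (M.mlsat_toMLModel_mlcoal ξ ψ w').mpr (hΓ ψ hψ w')
  · exact M.mlsat_toMLModel_rigidity ξ he w'
end

section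
/- Lemma 1 (Leibniz principle for rigid arguments of defined operators): let d be a defined n-ary operator, e₁,…,eₙ expressions, i ∈ 1..n with eᵢ rigid, M a Kripke model, w a state, and x a rigid variable not occurring free in any eⱼ. Then ⟦d(e₁,…,eₙ)⟧^M_w = ⟦d(e₁,…,e_{i−1},x,e_{i+1},…,eₙ)⟧^{M'}_w, where M' agrees with M except for the valuation of rigid variables, which is like ξ but assigns x to ⟦eᵢ⟧^M_w. -/
open scoped Classical

variable {X V O : Type} {ar : O → ℕ}

/-! ### Capture-avoiding substitution and defined operators -/

/-- The list of free rigid variables of an expression. -/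
noncomputable def freeList : Expr X V O ar → List X
  | .rig x => [x]
  | .flex _ => []
  | .app _ es => (List.ofFn fun i => freeList (es i)).flatten
  | .eq a b => freeList a ++ freeList b
  | .fls => []
  | .imp a b => freeList a ++ freeList b
  | .all x e => (freeList e).filter (fun y => decide (y ≠ x))
  | .nabla e => freeList e

/-- A rigid variable avoiding a given (finite) list; exists since 𝒳 is denumerable. -/
noncomputable def freshVar [Infinite X] (l : List X) : X :=
  Classical.choose (Infinite.exists_notMem_finset l.toFinset)

/-- Capture-avoiding simultaneous substitution: `subst σ e` replaces every free
    rigid variable `y` of `e` by `σ y`, renaming bound variables to fresh ones so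
    that no free variable of the substituted expressions is captured. -/
noncomputable def subst [Infinite X] (σ : X → Expr X V O ar) :
    Expr X V O ar → Expr X V O ar
  | .rig x => σ x
  | .flex v => .flex v
  | .app op es => .app op (fun i => subst σ (es i))
  | .eq a b => .eq (subst σ a) (subst σ b)
  | .fls => .fls
  | .imp a b => .imp (subst σ a) (subst σ b)
  | .all x e =>
      let x' := freshVar ((freeList e).flatMap (fun y => freeList (σ y)))
      .all x' (subst (Function.update σ x (.rig x')) e)
  | .nabla e => .nabla (subst σ e)

/-- The substitution [e₁/x₁, …, eₙ/xₙ] as a total map on rigid variables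
    (the parameters x₁, …, xₙ being pairwise distinct). -/
noncomputable def substMap {n : ℕ} (xs : Fin n → X) (es : Fin n → Expr X V O ar) :
    X → Expr X V O ar :=
  fun y => if h : ∃ i, xs i = y then es h.choose else .rig y

/-- The application d(e₁,…,eₙ) of the operator defined by d(x₁,…,xₙ) ≜ body,
    i.e. the expression body[e₁/x₁, …, eₙ/xₙ]. -/
noncomputable def dApp [Infinite X] {n : ℕ} (xs : Fin n → X)
    (body : Expr X V O ar) (es : Fin n → Expr X V O ar) : Expr X V O ar :=
  subst (substMap xs es) body

/-- `occursUnderNabla y e` holds iff `y` has a free occurrence in `e` lying in the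
    scope of some occurrence of ∇ (i.e. within a non-Leibniz argument position). -/
def occursUnderNabla (y : X) : Expr X V O ar → Prop
  | .rig _ => False
  | .flex _ => False
  | .app _ es => ∃ i, occursUnderNabla y (es i)
  | .eq a b => occursUnderNabla y a ∨ occursUnderNabla y b
  | .fls => False
  | .imp a b => occursUnderNabla y a ∨ occursUnderNabla y b
  | .all x e => y ≠ x ∧ occursUnderNabla y e
  | .nabla e => freeRigid y e

/-- The i-th argument position of the operator defined by d(x₁,…,xₙ) ≜ body is
    Leibniz iff xᵢ does not occur within a non-Leibniz argument position in body. -/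
def LeibnizPos {n : ℕ} (xs : Fin n → X) (body : Expr X V O ar) (i : Fin n) : Prop :=
  ¬ occursUnderNabla (xs i) body

/-!
Substituting, for every free variable of the body, expressions that take the same value at
*every* state yields expressions that take the same value at every state; the quantification
over states is what carries the argument through `∇`. Replacing the rigid `eᵢ` by `x`, valued at
`⟦eᵢ⟧_w`, meets this requirement precisely because a rigid expression has the same value at
every state, while the other arguments do not see the change of `ξ(x)`.
-/

lemma freshVar_not_mem [Infinite X] (l : List X) : freshVar l ∉ l := by
  simpa [freshVar, List.mem_toFinset] using
    Classical.choose_spec (Infinite.exists_notMem_finset l.toFinset)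

lemma mem_freeList_iff {y : X} (e : Expr X V O ar) : y ∈ freeList e ↔ freeRigid y e := by
  induction e with
  | app op es ih =>
      simp only [freeList, freeRigid, List.mem_flatten, List.mem_ofFn]
      constructor
      · rintro ⟨l, ⟨i, rfl⟩, h⟩
        exact ⟨i, (ih i).1 h⟩
      · rintro ⟨i, h⟩
        exact ⟨freeList (es i), ⟨i, rfl⟩, (ih i).2 h⟩
  | all x e ih => simp [freeList, freeRigid, ih, List.mem_filter, and_comm]
  | _ => simp_all [freeList, freeRigid]

lemma freshVar_not_freeRigid [Infinite X] (σ : X → Expr X V O ar) {e : Expr X V O ar} {y : X}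
    (hy : freeRigid y e) :
    ¬ freeRigid (freshVar ((freeList e).flatMap fun y => freeList (σ y))) (σ y) := fun h =>
  freshVar_not_mem _ (List.mem_flatMap.2 ⟨y, (mem_freeList_iff e).2 hy, (mem_freeList_iff _).2 h⟩)

section Eval

variable (M : Model X V O ar)

lemma eval_congr_of_freeRigid (e : Expr X V O ar) {ξ₁ ξ₂ : X → M.U}
    (h : ∀ y, freeRigid y e → ξ₁ y = ξ₂ y) (w : M.W) : eval M e ξ₁ w = eval M e ξ₂ w := by
  induction e generalizing ξ₁ ξ₂ w with
  | rig x => exact h x rfl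
  | flex v => rfl
  | app op es ih => simp only [eval, ih _ fun y hy => h y ⟨_, hy⟩]
  | eq a b iha ihb | imp a b iha ihb =>
      simp only [eval, iha fun y hy => h y (Or.inl hy), ihb fun y hy => h y (Or.inr hy)]
  | fls => rfl
  | all x e ih =>
      have hupd : ∀ d, eval M e (Function.update ξ₁ x d) w = eval M e (Function.update ξ₂ x d) w :=
        fun d => ih (fun y hy => by
          by_cases hyx : y = x
          · simp [hyx]
          · simpa [hyx] using h y ⟨hyx, hy⟩) w
      simp only [eval, hupd]
  | nabla e ih => simp only [eval, ih h]

lemma eval_update_of_not_freeRigid (e : Expr X V O ar) (ξ : X → M.U) {x : X}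
    (hx : ¬ freeRigid x e) (d : M.U) (w : M.W) :
    eval M e (Function.update ξ x d) w = eval M e ξ w :=
  eval_congr_of_freeRigid M e
    (fun y hy => Function.update_of_ne (fun hyx : y = x => hx (hyx ▸ hy)) _ _) w

lemma Rigid.eval_eq {e : Expr X V O ar} (he : Rigid e) (ξ : X → M.U) (w₁ w₂ : M.W) :
    eval M e ξ w₁ = eval M e ξ w₂ := by
  induction e generalizing ξ with
  | flex v | nabla e => exact he.elim
  | app op es ih => simp only [eval, fun i => ih i (he i) ξ]
  | eq a b iha ihb | imp a b iha ihb => simp only [eval, iha he.1, ihb he.2]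
  | all x e ih => simp only [eval, fun d => ih he (Function.update ξ x d)]
  | rig x | fls => rfl

lemma eval_subst_congr [Infinite X] (e : Expr X V O ar) {σ σ' : X → Expr X V O ar}
    {ξ₁ ξ₂ : X → M.U} (h : ∀ y, freeRigid y e → ∀ w, eval M (σ y) ξ₁ w = eval M (σ' y) ξ₂ w)
    (w : M.W) : eval M (subst σ e) ξ₁ w = eval M (subst σ' e) ξ₂ w := by
  induction e generalizing σ σ' ξ₁ ξ₂ w with
  | rig x => exact h x rfl w
  | flex v => rfl
  | app op es ih => simp only [subst, eval, ih _ fun y hy => h y ⟨_, hy⟩]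
  | eq a b iha ihb | imp a b iha ihb =>
      simp only [subst, eval, iha fun y hy => h y (Or.inl hy), ihb fun y hy => h y (Or.inr hy)]
  | fls => rfl
  | all x e ih =>
      simp only [subst, eval]
      set x₁ := freshVar ((freeList e).flatMap fun y => freeList (σ y))
      set x₂ := freshVar ((freeList e).flatMap fun y => freeList (σ' y))
      have hbound : ∀ d w', eval M (subst (Function.update σ x (.rig x₁)) e)
            (Function.update ξ₁ x₁ d) w'
          = eval M (subst (Function.update σ' x (.rig x₂)) e) (Function.update ξ₂ x₂ d) w' := by
        intro d
        refine ih fun y hy w' => ?_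
        by_cases hyx : y = x
        · simp [hyx, eval]
        · rw [Function.update_of_ne hyx, Function.update_of_ne hyx,
            eval_update_of_not_freeRigid M _ _ (freshVar_not_freeRigid σ hy),
            eval_update_of_not_freeRigid M _ _ (freshVar_not_freeRigid σ' hy)]
          exact h y ⟨hyx, hy⟩ w'
      simp only [hbound]
  | nabla e ih => simp only [subst, eval, ih h]

end Eval

lemma eval_update_arg_of_rigid (M : Model X V O ar) {n : ℕ} {es : Fin n → Expr X V O ar}
    {i : Fin n} (hrig : Rigid (es i)) (ξ : X → M.U) (w : M.W) {x : X}
    (hx : ∀ j, ¬ freeRigid x (es j)) (k : Fin n) (w' : M.W) :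
    eval M (es k) ξ w' =
      eval M (Function.update es i (.rig x) k) (Function.update ξ x (eval M (es i) ξ w)) w' := by
  by_cases hki : k = i
  · subst hki
    simpa [eval] using hrig.eval_eq M ξ w' w
  · rw [Function.update_of_ne hki, eval_update_of_not_freeRigid M _ _ (hx k)]

theorem leibniz_rigid_arg_general [Infinite X] {n : ℕ}
    (xs : Fin n → X)
    (body : Expr X V O ar) (hbody : ∀ y : X, freeRigid y body → ∃ i, xs i = y)
    (es : Fin n → Expr X V O ar) (i : Fin n) (hrig : Rigid (es i))
    (M : Model X V O ar) (ξ : X → M.U) (w : M.W)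
    (x : X) (hx : ∀ j : Fin n, ¬ freeRigid x (es j)) :
    eval M (dApp xs body es) ξ w =
      eval M (dApp xs body (Function.update es i (Expr.rig x)))
        (Function.update ξ x (eval M (es i) ξ w)) w := by
  refine eval_subst_congr M body (fun y hy w' => ?_) w
  have hparam := hbody y hy
  simp only [substMap, dif_pos hparam]
  exact eval_update_arg_of_rigid M hrig ξ w hx _ w'

/-- Lemma 1, Leibniz principle for rigid arguments: for an operator
    defined by d(x₁,…,xₙ) ≜ body, expressions e₁,…,eₙ with eᵢ rigid, and a rigid
    variable x free in no eⱼ,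
    ⟦d(e₁,…,eₙ)⟧^M_w = ⟦d(e₁,…,x,…,eₙ)⟧^{M'}_w
    where M' is M with ξ(x) changed to ⟦eᵢ⟧^M_w. -/
theorem leibniz_rigid_arg [Infinite X] {n : ℕ}
    (xs : Fin n → X) (hinj : Function.Injective xs)
    (body : Expr X V O ar) (hbody : ∀ y : X, freeRigid y body → ∃ i, xs i = y)
    (es : Fin n → Expr X V O ar) (i : Fin n) (hrig : Rigid (es i))
    (M : Model X V O ar) (ξ : X → M.U) (w : M.W)
    (x : X) (hx : ∀ j : Fin n, ¬ freeRigid x (es j)) :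
    eval M (dApp xs body es) ξ w =
      eval M (dApp xs body (Function.update es i (Expr.rig x)))
        (Function.update ξ x (eval M (es i) ξ w)) w :=
  leibniz_rigid_arg_general xs body hbody es i hrig M ξ w x hx
end
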